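/- Let A, B, X be bounded operators on a complex Hilbert space H with A, B positive, 0 ≤ α ≤ 1, and r ≥ 2. Then for every unit vector k ∈ H, |⟨((A^α X B^(1-α) + A^(1-α) X B^α)/2) k, k⟩|^r ≤ (‖X‖^r/2)·⟨(A^r + B^r) k, k⟩. -/

import Mathlib

/-!
Each summand of the Heinz mean satisfies `|⟪A^α X B^(1-α) k, k⟫| ≤ ‖X‖ ‖A^α k‖ ‖B^(1-α) k‖`.
McCarthy's inequality `⟪T k, k⟫^p ≤ ⟪T^p k, k⟫` (`T ≥ 0`, `p ≥ 1`, `‖k‖ = 1`) follows by applying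
the functional calculus to the tangent line of `t ↦ t^p` at `⟪T k, k⟫`. Applied to `T = A^(2α)` and
`p = 1/α` it gives `‖A^α k‖ ≤ ‖A k‖^α`, so weighted AM-GM bounds the Heinz term by
`‖X‖ (‖A k‖ + ‖B k‖) / 2`. Raising this to the power `r`, convexity of `t ↦ t^r` and McCarthy once
more, `‖A k‖^r = ⟪A² k, k⟫^(r/2) ≤ ⟪A^r k, k⟫`, finish the proof.
-/

open scoped InnerProductSpace
open ContinuousLinearMap Complex

variable {H : Type*} [NormedAddCommGroup H] [InnerProductSpace ℂ H] [CompleteSpace H]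

/-- `T ^ e` for a (positive) operator `T`, via the continuous functional calculus. -/
noncomputable def opow (T : H →L[ℂ] H) (e : ℝ) : H →L[ℂ] H :=
  cfc (fun t : ℝ => t ^ e) T

section InnerProductSpace

variable {𝕜 E : Type*} [RCLike 𝕜] [NormedAddCommGroup E] [InnerProductSpace 𝕜 E]

theorem ContinuousLinearMap.re_inner_le_re_inner_of_le {S T : E →L[𝕜] E} (h : S ≤ T) (x : E) :
    RCLike.re ⟪S x, x⟫_𝕜 ≤ RCLike.re ⟪T x, x⟫_𝕜 := by
  have := ((le_def S T).1 h).re_inner_nonneg_left x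
  rw [sub_apply, inner_sub_left, map_sub] at this
  linarith

theorem norm_inner_mul_mul_apply_self_le {P : E →L[𝕜] E} (hP : (P : E →ₗ[𝕜] E).IsSymmetric)
    (X Q : E →L[𝕜] E) (x : E) :
    ‖⟪(P * X * Q) x, x⟫_𝕜‖ ≤ ‖X‖ * (‖P x‖ * ‖Q x‖) :=
  calc ‖⟪(P * X * Q) x, x⟫_𝕜‖ = ‖⟪X (Q x), P x⟫_𝕜‖ := congrArg norm (hP (X (Q x)) x)
    _ ≤ ‖X (Q x)‖ * ‖P x‖ := norm_inner_le_norm _ _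
    _ ≤ ‖X‖ * ‖Q x‖ * ‖P x‖ := by gcongr; exact X.le_opNorm _
    _ = ‖X‖ * (‖P x‖ * ‖Q x‖) := by ring

end InnerProductSpace

theorem Real.mul_rpow_sub_one_mul_le {p c t : ℝ} (hp : 1 ≤ p) (hc : 0 ≤ c) (ht : 0 ≤ t) :
    p * c ^ (p - 1) * t ≤ t ^ p + (p - 1) * c ^ p := by
  have hp0 : 0 < p := by linarith
  have amgm := Real.geom_mean_le_arith_mean2_weighted (inv_nonneg.2 hp0.le)
    (sub_nonneg.2 (inv_le_one_of_one_le₀ hp)) (rpow_nonneg ht p) (rpow_nonneg hc p)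
    (add_sub_cancel p⁻¹ 1)
  rw [← rpow_mul ht, ← rpow_mul hc, mul_inv_cancel₀ hp0.ne', rpow_one,
    show p * (1 - p⁻¹) = p - 1 by field_simp] at amgm
  have := mul_le_mul_of_nonneg_left amgm hp0.le
  field_simp at this
  linarith

theorem Real.add_div_two_rpow_le {a b p : ℝ} (ha : 0 ≤ a) (hb : 0 ≤ b) (hp : 1 ≤ p) :
    ((a + b) / 2) ^ p ≤ (a ^ p + b ^ p) / 2 :=
  calc ((a + b) / 2) ^ p = ((1 / 2 : ℝ) • a + (1 / 2 : ℝ) • b) ^ p := by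
        rw [smul_eq_mul, smul_eq_mul]; ring_nf
    _ ≤ (1 / 2 : ℝ) • a ^ p + (1 / 2 : ℝ) • b ^ p :=
        (convexOn_rpow hp).2 ha hb (by norm_num) (by norm_num) (add_halves 1)
    _ = (a ^ p + b ^ p) / 2 := by simp only [smul_eq_mul]; ring

theorem rpow_re_inner_le_re_inner_rpow {T : H →L[ℂ] H} (hT : 0 ≤ T) {p : ℝ} (hp : 1 ≤ p)
    {k : H} (hk : ‖k‖ = 1) : (⟪T k, k⟫_ℂ).re ^ p ≤ (⟪(T ^ p) k, k⟫_ℂ).re := by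
  set c := (⟪T k, k⟫_ℂ).re
  have hc : 0 ≤ c := ((nonneg_iff_isPositive T).1 hT).re_inner_nonneg_left k
  have tangent : (p * c ^ (p - 1)) • T - ((p - 1) * c ^ p) • (1 : H →L[ℂ] H) ≤ T ^ p :=
    calc _ = cfc (fun x : ℝ => p * c ^ (p - 1) * x - (p - 1) * c ^ p) T := by
          rw [cfc_sub .., cfc_const_mul_id .., cfc_const .., Algebra.algebraMap_eq_smul_one]
      _ ≤ cfc (fun x : ℝ => x ^ p) T :=
          cfc_mono (hg := (Real.continuous_rpow_const (by linarith)).continuousOn) fun x hx => by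
            linarith [Real.mul_rpow_sub_one_mul_le hp hc (spectrum_nonneg_of_nonneg hT hx)]
      _ = T ^ p := (CFC.rpow_eq_cfc_real hT).symm
  calc c ^ p = p * c ^ (p - 1) * c - (p - 1) * c ^ p := by
        rw [mul_assoc, ← Real.rpow_add_one' hc (by linarith), sub_add_cancel]; ring
    _ = (⟪((p * c ^ (p - 1)) • T - ((p - 1) * c ^ p) • (1 : H →L[ℂ] H)) k, k⟫_ℂ).re := by
        simp [hk, c]
    _ ≤ (⟪(T ^ p) k, k⟫_ℂ).re := re_inner_le_re_inner_of_le tangent k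

theorem opow_eq_rpow {T : H →L[ℂ] H} (hT : 0 ≤ T) (e : ℝ) : opow T e = T ^ e :=
  (CFC.rpow_eq_cfc_real hT).symm

theorem norm_rpow_apply_sq {T : H →L[ℂ] H} (hT : 0 ≤ T) {s : ℝ} (hs : 0 ≤ s) (k : H) :
    ‖(T ^ s) k‖ ^ 2 = (⟪(T ^ (2 * s)) k, k⟫_ℂ).re := by
  rw [apply_norm_sq_eq_inner_adjoint_left, (CFC.rpow_nonneg (a := T)).isSelfAdjoint.adjoint_eq,
    ← mul_def, ← sq, ← CFC.rpow_natCast _ 2,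
    CFC.rpow_rpow_of_exponent_nonneg T s _ hs (by norm_num), Nat.cast_ofNat, mul_comm]
  rfl

theorem norm_apply_sq {T : H →L[ℂ] H} (hT : 0 ≤ T) (k : H) :
    ‖T k‖ ^ 2 = (⟪(T ^ (2 : ℝ)) k, k⟫_ℂ).re := by
  simpa [CFC.rpow_one T hT] using norm_rpow_apply_sq hT zero_le_one k

theorem norm_rpow_apply_le {T : H →L[ℂ] H} (hT : 0 ≤ T) {s : ℝ} (hs0 : 0 ≤ s) (hs1 : s ≤ 1)
    {k : H} (hk : ‖k‖ = 1) : ‖(T ^ s) k‖ ≤ ‖T k‖ ^ s := by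
  rcases hs0.eq_or_lt with rfl | hs
  · simp [CFC.rpow_zero T hT, hk]
  have mccarthy := rpow_re_inner_le_re_inner_rpow (T := T ^ (2 * s)) CFC.rpow_nonneg
    (one_le_inv₀ hs |>.2 hs1) hk
  rw [CFC.rpow_rpow_of_exponent_nonneg T _ _ (by positivity) (by positivity),
    mul_inv_cancel_right₀ hs.ne', ← norm_rpow_apply_sq hT hs.le, ← norm_apply_sq hT] at mccarthy
  have := Real.rpow_le_rpow (by positivity) mccarthy hs.le
  rw [Real.rpow_inv_rpow (by positivity) hs.ne', ← Real.rpow_pow_comm (norm_nonneg _)] at this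
  exact (sq_le_sq₀ (norm_nonneg _) (by positivity)).1 this

theorem norm_apply_rpow_le {T : H →L[ℂ] H} (hT : 0 ≤ T) {r : ℝ} (hr : 2 ≤ r)
    {k : H} (hk : ‖k‖ = 1) : ‖T k‖ ^ r ≤ (⟪(T ^ r) k, k⟫_ℂ).re := by
  have mccarthy := rpow_re_inner_le_re_inner_rpow (T := T ^ (2 : ℝ)) CFC.rpow_nonneg
    (p := r / 2) (by linarith) hk
  rwa [CFC.rpow_rpow_of_exponent_nonneg T _ _ (by norm_num) (by linarith),
    mul_div_cancel₀ _ two_ne_zero, ← norm_apply_sq hT, ← Real.rpow_natCast,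
    ← Real.rpow_mul (norm_nonneg _), Nat.cast_ofNat,
    mul_div_cancel₀ _ two_ne_zero] at mccarthy

theorem norm_rpow_apply_mul_norm_rpow_apply_le {A B : H →L[ℂ] H} (hA : 0 ≤ A) (hB : 0 ≤ B)
    {α : ℝ} (hα0 : 0 ≤ α) (hα1 : α ≤ 1) {k : H} (hk : ‖k‖ = 1) :
    ‖(A ^ α) k‖ * ‖(B ^ (1 - α)) k‖ ≤ α * ‖A k‖ + (1 - α) * ‖B k‖ :=
  calc _ ≤ ‖A k‖ ^ α * ‖B k‖ ^ (1 - α) :=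
        mul_le_mul (norm_rpow_apply_le hA hα0 hα1 hk)
          (norm_rpow_apply_le hB (sub_nonneg.2 hα1) (by linarith) hk) (norm_nonneg _)
          (by positivity)
    _ ≤ _ := Real.geom_mean_le_arith_mean2_weighted hα0 (sub_nonneg.2 hα1) (norm_nonneg _)
          (norm_nonneg _) (add_sub_cancel α 1)

noncomputable def heinzMean (A B X : H →L[ℂ] H) (α : ℝ) : H →L[ℂ] H :=
  (1 / 2 : ℝ) • (A ^ α * X * B ^ (1 - α) + A ^ (1 - α) * X * B ^ α)

theorem norm_inner_heinzMean_le {A B : H →L[ℂ] H} (hA : 0 ≤ A) (hB : 0 ≤ B) (X : H →L[ℂ] H)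
    {α : ℝ} (hα0 : 0 ≤ α) (hα1 : α ≤ 1) {k : H} (hk : ‖k‖ = 1) :
    ‖⟪heinzMean A B X α k, k⟫_ℂ‖ ≤ ‖X‖ * ((‖A k‖ + ‖B k‖) / 2) := by
  have symm (e : ℝ) : ((A ^ e : H →L[ℂ] H) : H →ₗ[ℂ] H).IsSymmetric :=
    ((nonneg_iff_isPositive _).1 CFC.rpow_nonneg).isSymmetric
  have h₁ := norm_inner_mul_mul_apply_self_le (symm α) X (B ^ (1 - α)) k
  have h₂ := norm_inner_mul_mul_apply_self_le (symm (1 - α)) X (B ^ α) k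
  have p₁ := norm_rpow_apply_mul_norm_rpow_apply_le hA hB hα0 hα1 hk
  have p₂ := norm_rpow_apply_mul_norm_rpow_apply_le hA hB (sub_nonneg.2 hα1) (by linarith) hk
  rw [sub_sub_cancel] at p₂
  calc ‖⟪heinzMean A B X α k, k⟫_ℂ‖
        = ‖⟪(A ^ α * X * B ^ (1 - α)) k, k⟫_ℂ + ⟪(A ^ (1 - α) * X * B ^ α) k, k⟫_ℂ‖ / 2 := by
          simp [heinzMean, ← mul_add, div_eq_inv_mul]
    _ ≤ (‖X‖ * (α * ‖A k‖ + (1 - α) * ‖B k‖) + ‖X‖ * ((1 - α) * ‖A k‖ + α * ‖B k‖)) / 2 := by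
          gcongr
          exact (norm_add_le _ _).trans (add_le_add (h₁.trans (by gcongr)) (h₂.trans (by gcongr)))
    _ = ‖X‖ * ((‖A k‖ + ‖B k‖) / 2) := by ring

theorem berezin_pointwise_heinz (A B X : H →L[ℂ] H)
    (hA : A.IsPositive) (hB : B.IsPositive) (α r : ℝ)
    (hα0 : 0 ≤ α) (hα1 : α ≤ 1) (hr : 2 ≤ r) (k : H) (hk : ‖k‖ = 1) :
    ‖⟪((1 / 2 : ℝ) •
        (opow A α * X * opow B (1 - α) + opow A (1 - α) * X * opow B α)) k, k⟫_ℂ‖ ^ r ≤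
      ‖X‖ ^ r / 2 * (⟪(opow A r + opow B r) k, k⟫_ℂ).re := by
  rw [← nonneg_iff_isPositive] at hA hB
  simp only [opow_eq_rpow hA, opow_eq_rpow hB]
  set a := ‖A k‖
  set b := ‖B k‖
  calc ‖⟪heinzMean A B X α k, k⟫_ℂ‖ ^ r ≤ (‖X‖ * ((a + b) / 2)) ^ r :=
        Real.rpow_le_rpow (norm_nonneg _) (norm_inner_heinzMean_le hA hB X hα0 hα1 hk)
          (by linarith)
    _ = ‖X‖ ^ r * ((a + b) / 2) ^ r := Real.mul_rpow (norm_nonneg _) (by positivity)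
    _ ≤ ‖X‖ ^ r * ((a ^ r + b ^ r) / 2) := by
        gcongr; exact Real.add_div_two_rpow_le (norm_nonneg _) (norm_nonneg _) (by linarith)
    _ ≤ ‖X‖ ^ r / 2 * ((⟪(A ^ r) k, k⟫_ℂ).re + (⟪(B ^ r) k, k⟫_ℂ).re) := by
        rw [mul_div_assoc', div_mul_eq_mul_div]
        gcongr
        exacts [norm_apply_rpow_le hA hr hk, norm_apply_rpow_le hB hr hk]
    _ = ‖X‖ ^ r / 2 * (⟪(A ^ r + B ^ r) k, k⟫_ℂ).re := by
        rw [add_apply, inner_add_left, add_re]
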